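/- Let X be a transitive nearest-neighbor SFT on s letters that is infinite. Then h_top(X) ≥ (ln 2)/s. -/

import Mathlib

open Filter Topology MeasureTheory Set

def shiftMap (A : Type*) : (ℤ → A) → (ℤ → A) := fun x n => x (n + 1)

def occursAt {A : Type*} (x : ℤ → A) (i : ℤ) (w : List A) : Prop :=
  ∀ j : Fin w.length, x (i + (j : ℕ)) = w.get j

def inLang {A : Type*} (X : Set (ℤ → A)) (w : List A) : Prop :=
  ∃ x ∈ X, occursAt x 0 w

def sftCover {A : Type*} (X : Set (ℤ → A)) (n : ℕ) : Set (ℤ → A) :=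
  { x | ∀ (i : ℤ) (w : List A), w.length ≤ n → occursAt x i w → inLang X w }

def IsSubshift {A : Type*} [TopologicalSpace A] (X : Set (ℤ → A)) : Prop :=
  X.Nonempty ∧ IsClosed X ∧ shiftMap A '' X = X

def minPeriodPts {A : Type*} (S : Set (ℤ → A)) (p : ℕ) : Set (ℤ → A) :=
  { x ∈ S | (shiftMap A)^[p] x = x ∧ ∀ q : ℕ, 0 < q → q < p → (shiftMap A)^[q] x ≠ x }

def PeriodStable {A : Type*} (X : Set (ℤ → A)) : Prop :=
  ∀ m : ℕ, ∃ n p : ℕ, 0 < p ∧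
    minPeriodPts (sftCover X n) p = minPeriodPts (sftCover X (n + m)) p

def LanguageStable {A : Type*} (X : Set (ℤ → A)) : Prop :=
  ∀ m : ℕ, ∃ n : ℕ, sftCover X n = sftCover X (n + m)

def TopMixing {A : Type*} (X : Set (ℤ → A)) : Prop :=
  ∀ u v : List A, inLang X u → inLang X v →
    ∃ N : ℕ, ∀ n ≥ N, ∃ w : List A, w.length = n ∧ inLang X (u ++ w ++ v)

def LangTransitive {A : Type*} (X : Set (ℤ → A)) : Prop :=
  ∀ u v : List A, inLang X u → inLang X v → ∃ w : List A, inLang X (u ++ w ++ v)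

def globalSlide {A : Type*} (R : ℕ) (Φ : List A → A) : (ℤ → A) → (ℤ → A) :=
  fun x i => Φ (List.ofFn (fun j : Fin (2 * R + 1) => x (i - R + (j : ℕ))))

def wordSlide {A : Type*} (R : ℕ) (Φ : List A → A) (w : List A) : List A :=
  (List.range (w.length - 2 * R)).map (fun j => Φ ((w.drop j).take (2 * R + 1)))

noncomputable def subshiftEntropy {A : Type*} (X : Set (ℤ → A)) : ℝ :=
  Filter.limsup
    (fun n : ℕ => Real.log (Nat.card { w : List A // w.length = n ∧ inLang X w }) / n)
    Filter.atTop

def IsNNSFT {A : Type*} (X : Set (ℤ → A)) : Prop :=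
  ∃ F : Set (List A), (∀ w ∈ F, w.length ≤ 2) ∧
    X = { x | ∀ (i : ℤ) (w : List A), w ∈ F → ¬ occursAt x i w }

noncomputable def xi (s : ℕ) : ℝ :=
  30 * (s : ℝ) ^ (3 * (s ^ 2 + 1)) /
    (1 - Real.rpow (1 - 1 / (4 * (s : ℝ) ^ (2 * s ^ 2))) (1 / (s ^ 2 : ℝ)))

noncomputable def measEntropy {A : Type*} [Fintype A] [MeasurableSpace A]
    (μ : MeasureTheory.Measure (ℤ → A)) : ℝ :=
  Filter.limsup
    (fun n : ℕ =>
      (∑ w : Fin n → A,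
        Real.negMulLog ((μ { x : ℤ → A | ∀ j : Fin n, x ((j : ℕ) : ℤ) = w j }).toReal)) / n)
    Filter.atTop

/-!
If every letter had at most one follower in the transition graph `a → b :↔ [a, b] ∈ L(X)`, a
point would be determined by a single letter and `X` would be finite. So some `v` has two
followers `a ≠ b`. By transitivity there are cycles `v a ⋯ v` and `v b ⋯ v` of lengths
`p, q ≤ s`, and since `X` is nearest-neighbour every concatenation of them lies in the language.
Taking `k` copies of each in every possible order gives `(2k).choose k ≥ 4 ^ k / (2k + 1)`
distinct words of length `k (p + q) + 1`, so `h_top(X) ≥ log 4 / (p + q) ≥ log 2 / s`.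
-/

theorem List.injective_flatten_map_cond {α : Type*} {u₁ u₂ : List α} (h₁ : u₁ ≠ [])
    (h₂ : u₂ ≠ []) (h : u₁.head? ≠ u₂.head?) :
    Function.Injective fun β : List Bool => (β.map (cond · u₂ u₁)).flatten := by
  have hhead (i : Bool) (t : List α) : (cond i u₂ u₁ ++ t).head? = (cond i u₂ u₁).head? :=
    List.head?_append_of_ne_nil _ (by cases i <;> assumption)
  intro β γ hβγ
  induction β generalizing γ with
  | nil => cases γ with
    | nil => rfl
    | cons j γ => cases j <;> simp_all
  | cons i β ih => cases γ with
    | nil => cases i <;> simp_all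
    | cons j γ =>
      simp only [List.map_cons, List.flatten_cons] at hβγ
      obtain rfl : i = j := by
        have := congrArg List.head? hβγ
        rw [hhead, hhead] at this
        cases i <;> cases j <;> simp_all
      rw [ih (List.append_cancel_left hβγ)]

theorem List.length_flatten_map_ofFn_cond {α : Type*} (u₁ u₂ : List α) {n : ℕ}
    (S : Finset (Fin n)) :
    ((List.ofFn fun i => decide (i ∈ S)).map (cond · u₂ u₁)).flatten.length
      = S.card * u₂.length + (n - S.card) * u₁.length := by
  simp only [List.length_flatten, List.map_ofFn, List.sum_ofFn, Function.comp_apply,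
    Bool.cond_decide, apply_ite List.length]
  simp [Finset.sum_ite, Finset.filter_not, Finset.card_sdiff]

theorem le_limsup_of_tendsto_of_le_comp {α ι κ : Type*} [ConditionallyCompleteLinearOrder α]
    [TopologicalSpace α] [OrderTopology α] [DenselyOrdered α] {l : Filter ι} {l' : Filter κ}
    [l'.NeBot] {g : ι → α} {h : κ → α} {φ : κ → ι} {L : α}
    (hg : IsBoundedUnder (· ≤ ·) l g) (hφ : Tendsto φ l' l) (hh : Tendsto h l' (𝓝 L))
    (hle : ∀ᶠ k in l', h k ≤ g (φ k)) : L ≤ limsup g l := by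
  refine le_of_forall_lt_imp_le_of_dense fun c hc => le_limsup_of_frequently_le ?_ hg
  refine hφ.frequently (Eventually.frequently ?_)
  filter_upwards [hh.eventually (eventually_gt_nhds hc), hle] with k hck hk
  exact hck.le.trans hk

theorem mul_log_four_sub_log_le_log_choose (k : ℕ) :
    k * Real.log 4 - Real.log (2 * k + 1) ≤ Real.log ((2 * k).choose k) := by
  have h := Real.log_le_log (by positivity)
    (show ((4 : ℕ) ^ k : ℝ) ≤ (2 * k + 1) * (2 * k).choose k by
      exact_mod_cast Nat.four_pow_le_two_mul_add_one_mul_central_binom k)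
  rw [Real.log_mul (by positivity) (by exact_mod_cast (Nat.choose_pos (by omega)).ne'),
    Real.log_pow] at h
  push_cast at h
  linarith

theorem tendsto_mul_log_four_sub_log_div {P : ℝ} (hP : P ≠ 0) :
    Tendsto (fun k : ℕ => (k * Real.log 4 - Real.log (2 * k + 1)) / (k * P + 1)) atTop
      (𝓝 (Real.log 4 / P)) := by
  have hlog : Tendsto (fun k : ℕ => Real.log (2 * k + 1) / k) atTop (𝓝 0) := by
    have h := (Real.tendsto_pow_log_div_mul_add_atTop (1 / 2) (-1 / 2) 1 (by norm_num)).comp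
      (tendsto_atTop_add_const_right _ 1
        (tendsto_natCast_atTop_atTop.const_mul_atTop (two_pos : (0 : ℝ) < 2)))
    refine h.congr fun k => ?_
    simp only [Function.comp_apply, pow_one]
    ring_nf
  have h := ((tendsto_const_nhds (x := Real.log 4)).sub hlog).div
    (tendsto_const_nhds.add tendsto_one_div_atTop_nhds_zero_nat) (by simpa using hP)
  rw [sub_zero, add_zero] at h
  refine h.congr' ((eventually_ne_atTop 0).mono fun k hk => ?_)
  have hk : (k : ℝ) ≠ 0 := Nat.cast_ne_zero.2 hk
  simp only [Pi.div_apply]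
  field_simp

section Subshift

variable {A : Type*}

theorem occursAt_nil (x : ℤ → A) (i : ℤ) : occursAt x i [] := nofun

theorem occursAt_cons {x : ℤ → A} {i : ℤ} {a : A} {w : List A} :
    occursAt x i (a :: w) ↔ x i = a ∧ occursAt x (i + 1) w := by
  simp only [occursAt, List.length_cons, Fin.forall_fin_succ, Fin.val_zero, Fin.val_succ,
    List.get_eq_getElem, List.getElem_cons_zero, List.getElem_cons_succ]
  push_cast
  simp only [add_zero, add_assoc, add_comm (1 : ℤ)]

theorem occursAt_append {x : ℤ → A} {i : ℤ} {u v : List A} :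
    occursAt x i (u ++ v) ↔ occursAt x i u ∧ occursAt x (i + u.length) v := by
  induction u generalizing i with
  | nil => simp [occursAt_nil]
  | cons a u ih =>
    simp only [List.cons_append, occursAt_cons, ih, and_assoc, List.length_cons]
    push_cast
    ring_nf

theorem occursAt_congr {x y : ℤ → A} {i k : ℤ} {w : List A}
    (h : ∀ j : ℕ, j < w.length → x (i + j) = y (k + j)) :
    occursAt x i w ↔ occursAt y k w :=
  forall_congr' fun j => by rw [h j j.2]

theorem occursAt_comp_add (x : ℤ → A) (i k : ℤ) (w : List A) :
    occursAt (fun n => x (n + k)) i w ↔ occursAt x (i + k) w :=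
  occursAt_congr fun j _ => by rw [add_right_comm]

section Language

variable {X : Set (ℤ → A)}

theorem inLang_of_occursAt (hshift : ∀ x ∈ X, ∀ k : ℤ, (fun n => x (n + k)) ∈ X)
    {x : ℤ → A} (hx : x ∈ X) {i : ℤ} {w : List A} (h : occursAt x i w) : inLang X w :=
  ⟨_, hshift x hx i, by rwa [occursAt_comp_add, zero_add]⟩

theorem inLang_of_infix (hshift : ∀ x ∈ X, ∀ k : ℤ, (fun n => x (n + k)) ∈ X)
    {w l : List A} (hw : inLang X w) (hl : l <:+: w) : inLang X l := by
  obtain ⟨x, hx, hocc⟩ := hw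
  obtain ⟨s, t, rfl⟩ := hl
  rw [occursAt_append, occursAt_append] at hocc
  exact inLang_of_occursAt hshift hx hocc.1.2

theorem inLang_pair_of_mem (hshift : ∀ x ∈ X, ∀ k : ℤ, (fun n => x (n + k)) ∈ X)
    {x : ℤ → A} (hx : x ∈ X) (i : ℤ) : inLang X [x i, x (i + 1)] :=
  inLang_of_occursAt hshift hx (i := i) (by simp [occursAt_cons, occursAt_nil])

/-- If every letter has at most one follower, then the follower map on the letters of the
language is surjective (points are bi-infinite), hence injective, so a point is determined
by its letter at `0`. -/
theorem finite_of_inLang_pair_right_unique [Finite A]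
    (hshift : ∀ x ∈ X, ∀ k : ℤ, (fun n => x (n + k)) ∈ X)
    (hdet : ∀ {a b c : A}, inLang X [a, b] → inLang X [a, c] → b = c) : X.Finite := by
  have hletters : ∀ {a b : A}, inLang X [a, b] → inLang X [a] ∧ inLang X [b] := fun h =>
    ⟨inLang_of_infix hshift h ⟨[], [_], rfl⟩, inLang_of_infix hshift h ⟨[_], [], rfl⟩⟩
  have hfollow : ∀ a : {a : A // inLang X [a]}, ∃ b : {a : A // inLang X [a]},
      inLang X [a.1, b.1] := by
    rintro ⟨-, x, hx, hocc⟩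
    obtain ⟨rfl, -⟩ := occursAt_cons.1 hocc
    have h := inLang_pair_of_mem hshift hx 0
    exact ⟨⟨_, (hletters h).2⟩, h⟩
  choose f hf using hfollow
  have hf_inj : Function.Injective f := Finite.injective_iff_surjective.2 <| by
    rintro ⟨-, y, hy, hocc⟩
    obtain ⟨rfl, -⟩ := occursAt_cons.1 hocc
    have h := inLang_pair_of_mem hshift hy (-1)
    rw [neg_add_cancel] at h
    exact ⟨⟨_, (hletters h).1⟩, Subtype.ext (hdet (hf _) h)⟩
  have hpred : ∀ {a b c : A}, inLang X [a, c] → inLang X [b, c] → a = b := fun hac hbc =>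
    congrArg Subtype.val <| @hf_inj ⟨_, (hletters hac).1⟩ ⟨_, (hletters hbc).1⟩ <|
      Subtype.ext ((hdet (hf _) hac).trans (hdet (hf _) hbc).symm)
  have hdetermined : ∀ x ∈ X, ∀ y ∈ X, x 0 = y 0 → x = y := by
    intro x hx y hy h0
    funext i
    induction i using Int.induction_on with
    | zero => exact h0
    | succ i hi =>
      exact hdet (inLang_pair_of_mem hshift hx i) (hi ▸ inLang_pair_of_mem hshift hy i)
    | pred i hi =>
      have hx' := inLang_pair_of_mem hshift hx (-i - 1)
      have hy' := inLang_pair_of_mem hshift hy (-i - 1)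
      rw [sub_add_cancel] at hx' hy'
      exact hpred hx' (hi ▸ hy')
  have : Finite X := Finite.of_injective (fun x : X => x.1 0) fun x y h =>
    Subtype.ext (hdetermined _ x.2 _ y.2 h)
  exact X.toFinite

theorem IsNNSFT.comp_add_mem (hX : IsNNSFT X) {x : ℤ → A} (hx : x ∈ X) (k : ℤ) :
    (fun n => x (n + k)) ∈ X := by
  obtain ⟨F, -, rfl⟩ := hX
  exact fun i w hw hocc => hx (i + k) w hw ((occursAt_comp_add x i k w).1 hocc)

theorem IsNNSFT.inLang_of_infix (hX : IsNNSFT X) {w l : List A} (hw : inLang X w)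
    (hl : l <:+: w) : inLang X l :=
  _root_.inLang_of_infix (fun _ hx => hX.comp_add_mem hx) hw hl

/-- A forbidden word has length at most two, so each of its occurrences in the glued point
lies on one side of the shared letter. -/
theorem IsNNSFT.inLang_append_cons (hX : IsNNSFT X) {u w : List A} {m : A}
    (hu : inLang X (u ++ [m])) (hw : inLang X (m :: w)) : inLang X (u ++ m :: w) := by
  obtain ⟨x, hx, hxu⟩ := hu
  obtain ⟨y, hy, hyw⟩ := hw
  rw [occursAt_append, zero_add, occursAt_cons] at hxu
  rw [occursAt_cons] at hyw
  set z : ℤ → A := fun i => if i < u.length then x i else y (i - u.length) with hz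
  have hzx : ∀ i : ℤ, i ≤ u.length → z i = x i := by
    intro i hi
    rcases hi.lt_or_eq with hi | rfl
    · simp [hz, hi]
    · simp [hz, hxu.2.1, hyw.1]
  have hzy : ∀ i : ℤ, u.length ≤ i → z i = y (i - u.length) := fun i hi => by
    simp [hz, hi.not_gt]
  refine ⟨z, ?_, ?_⟩
  · obtain ⟨F, hF, rfl⟩ := hX
    intro i w' hw' hocc
    by_cases hi : (u.length : ℤ) ≤ i
    · refine hy (i - u.length) w' hw' ((occursAt_congr fun j _ => ?_).1 hocc)
      rw [hzy _ (by omega)]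
      ring_nf
    · have hlen := hF w' hw'
      exact hx i w' hw' ((occursAt_congr fun j hj => hzx _ (by omega)).1 hocc)
  · rw [occursAt_append, zero_add, occursAt_cons]
    refine ⟨(occursAt_congr fun j hj => hzx _ (by omega)).2 hxu.1,
      (hzy _ le_rfl).trans (by simpa using hyw.1), (occursAt_congr fun j _ => ?_).2 hyw.2⟩
    rw [hzy _ (by omega)]
    ring_nf

theorem IsNNSFT.inLang_take_append_drop (hX : IsNNSFT X) {w : List A} (hw : inLang X w)
    {i j : ℕ} (hij : i ≤ j) (hj : j < w.length) (h : w[i] = w[j]) :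
    inLang X (w.take i ++ w.drop j) := by
  have hpre : inLang X (w.take i ++ [w[j]]) := by
    rw [← h, List.take_concat_get']
    exact hX.inLang_of_infix hw (List.take_prefix _ _).isInfix
  have hsuf : inLang X (w[j] :: w.drop (j + 1)) := by
    rw [List.getElem_cons_drop]
    exact hX.inLang_of_infix hw (List.drop_suffix _ _).isInfix
  simpa [List.getElem_cons_drop] using hX.inLang_append_cons hpre hsuf

theorem IsNNSFT.exists_nodup (hX : IsNNSFT X) {w : List A} (hw : inLang X w) :
    ∃ w', inLang X w' ∧ w'.Nodup ∧ w'.head? = w.head? ∧ w'.getLast? = w.getLast? := by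
  induction hn : w.length using Nat.strong_induction_on generalizing w with
  | _ n ih =>
    by_cases hnd : w.Nodup
    · exact ⟨w, hw, hnd, rfl, rfl⟩
    obtain ⟨i, j, hi, hj, hij, heq⟩ : ∃ i j, ∃ (hi : i < w.length) (hj : j < w.length),
        i < j ∧ w[i] = w[j] := by
      simpa [List.Nodup, List.pairwise_iff_getElem] using hnd
    obtain ⟨w', hw', hnd', hhead, hlast⟩ :=
      ih _ (by simp; omega) (hX.inLang_take_append_drop hw hij.le hj heq) rfl
    refine ⟨w', hw', hnd', ?_, ?_⟩
    · rw [hhead, List.head?_append, List.head?_take, List.head?_drop]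
      rcases Nat.eq_zero_or_pos i with rfl | hi0
      · simp [List.head?_eq_getElem?, List.getElem?_eq_getElem hi, heq]
      · simp [hi0.ne', List.head?_eq_getElem?, List.getElem?_eq_getElem (hi0.trans hi)]
    · rw [hlast, List.getLast?_append, List.getLast?_drop]
      simp [hj.not_ge, List.getLast?_eq_getElem?,
        List.getElem?_eq_getElem (Nat.sub_one_lt_of_lt hj)]

/-- A cycle of length `u.length` through `v` in the transition graph `a → b :↔ [a, b] ∈ L(X)`,
written as the letters visited after `v`. -/
def IsLoopAt (X : Set (ℤ → A)) (v : A) (u : List A) : Prop :=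
  inLang X (v :: u) ∧ u.getLast? = some v

theorem IsLoopAt.ne_nil {v : A} {u : List A} (h : IsLoopAt X v u) : u ≠ [] := by
  rintro rfl
  simp [IsLoopAt] at h

theorem IsNNSFT.exists_isLoopAt [Fintype A] (hX : IsNNSFT X) (htrans : LangTransitive X)
    {v a : A} (h : inLang X [v, a]) :
    ∃ u, IsLoopAt X v u ∧ u.head? = some a ∧ u.length ≤ Fintype.card A := by
  obtain ⟨w, hw⟩ := htrans [a] [v] (hX.inLang_of_infix h ⟨[v], [], rfl⟩)
    (hX.inLang_of_infix h ⟨[], [a], rfl⟩)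
  obtain ⟨u, hu, hnd, hhead, hlast⟩ := hX.exists_nodup hw
  obtain ⟨t, rfl⟩ := List.head?_eq_some_iff.1 (hhead.trans rfl)
  refine ⟨a :: t, ⟨?_, hlast.trans List.getLast?_concat⟩, rfl, hnd.length_le_card⟩
  simpa using hX.inLang_append_cons (u := [v]) h hu

theorem IsNNSFT.inLang_cons_flatten (hX : IsNNSFT X) {v : A} (hv : inLang X [v])
    {L : List (List A)} (hL : ∀ u ∈ L, IsLoopAt X v u) : inLang X (v :: L.flatten) := by
  induction L with
  | nil => exact hv
  | cons u L ih =>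
    obtain ⟨hu, hlast⟩ := hL u List.mem_cons_self
    obtain ⟨u', rfl⟩ := List.getLast?_eq_some_iff.1 hlast
    simpa using hX.inLang_append_cons (u := v :: u') hu
      (ih fun u hu => hL u (List.mem_cons_of_mem _ hu))

end Language

section Counting

instance [Finite A] (X : Set (ℤ → A)) (n : ℕ) :
    Finite {w : List A // w.length = n ∧ inLang X w} :=
  Finite.of_injective (β := List.Vector A n) _ (Subtype.impEmbedding _ _ fun _ h => h.1).injective

theorem card_words_le [Fintype A] (X : Set (ℤ → A)) (n : ℕ) :
    Nat.card {w : List A // w.length = n ∧ inLang X w} ≤ Fintype.card A ^ n := by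
  simpa [Nat.card_eq_fintype_card, card_vector] using Nat.card_le_card_of_injective
    (β := List.Vector A n) _ (Subtype.impEmbedding _ _ fun _ h => h.1).injective

theorem log_card_words_div_le [Fintype A] (X : Set (ℤ → A)) (n : ℕ) :
    Real.log (Nat.card {w : List A // w.length = n ∧ inLang X w}) / n ≤
      Real.log (Fintype.card A) := by
  refine div_le_of_le_mul₀ n.cast_nonneg (Real.log_natCast_nonneg _) ?_
  rcases (Nat.card {w : List A // w.length = n ∧ inLang X w}).eq_zero_or_pos with h | h
  · rw [h, Nat.cast_zero, Real.log_zero]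
    exact mul_nonneg (Real.log_natCast_nonneg _) n.cast_nonneg
  · rw [mul_comm, ← Real.log_pow]
    exact Real.log_le_log (by exact_mod_cast h) (by exact_mod_cast card_words_le X n)

variable {X : Set (ℤ → A)}

/-- A `k`-element subset `S` of `Fin (2 * k)` is sent to the word `v u_0 ⋯ u_{2k-1}`, where
`u_i` is `u₂` for `i ∈ S` and `u₁` otherwise. -/
theorem IsNNSFT.choose_le_card_words [Finite A] (hX : IsNNSFT X) {v : A} {u₁ u₂ : List A}
    (h₁ : IsLoopAt X v u₁) (h₂ : IsLoopAt X v u₂) (h : u₁.head? ≠ u₂.head?) (k : ℕ) :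
    (2 * k).choose k ≤
      Nat.card {w : List A // w.length = k * (u₁.length + u₂.length) + 1 ∧ inLang X w} := by
  have hv : inLang X [v] := hX.inLang_of_infix h₁.1 ⟨[], u₁, rfl⟩
  let word (S : Finset (Fin (2 * k))) : List A :=
    v :: ((List.ofFn fun i => decide (i ∈ S)).map (cond · u₂ u₁)).flatten
  have hword (S : {S : Finset (Fin (2 * k)) // S.card = k}) :
      (word S).length = k * (u₁.length + u₂.length) + 1 ∧ inLang X (word S) := by
    refine ⟨?_, hX.inLang_cons_flatten hv (List.forall_mem_map.2 fun i _ => ?_)⟩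
    · simp only [word, List.length_cons, List.length_flatten_map_ofFn_cond, S.2]
      rw [two_mul, Nat.add_sub_cancel]
      ring
    · cases i
      exacts [h₁, h₂]
  have hinj : Function.Injective fun S : {S : Finset (Fin (2 * k)) // S.card = k} =>
      (⟨word S, hword S⟩ :
        {w : List A // w.length = k * (u₁.length + u₂.length) + 1 ∧ inLang X w}) := by
    intro S T hST
    have := List.injective_flatten_map_cond h₁.ne_nil h₂.ne_nil h
      (List.cons_injective (congrArg Subtype.val hST))
    ext i
    simpa using congrFun (List.ofFn_injective this) i
  calc (2 * k).choose k = Nat.card {S : Finset (Fin (2 * k)) // S.card = k} := by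
        simp [Nat.card_eq_fintype_card, Fintype.card_finset_len]
    _ ≤ _ := Nat.card_le_card_of_injective _ hinj

theorem log_four_div_le_subshiftEntropy [Fintype A] {P : ℕ} (hP : 0 < P)
    (h : ∀ k, (2 * k).choose k ≤ Nat.card {w : List A // w.length = k * P + 1 ∧ inLang X w}) :
    Real.log 4 / P ≤ subshiftEntropy X := by
  refine le_limsup_of_tendsto_of_le_comp (isBoundedUnder_of ⟨_, log_card_words_div_le X⟩)
    (tendsto_atTop_mono (fun k => Nat.le_succ_of_le (Nat.le_mul_of_pos_right k hP)) tendsto_id)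
    (tendsto_mul_log_four_sub_log_div (Nat.cast_ne_zero.2 hP.ne'))
    (Eventually.of_forall fun k => ?_)
  push_cast
  gcongr
  exact (mul_log_four_sub_log_le_log_choose k).trans
    (Real.log_le_log (by exact_mod_cast Nat.choose_pos (by omega)) (by exact_mod_cast h k))

end Counting

end Subshift

theorem nnsft_entropy_lower_bound {A : Type*} [Fintype A]
    (X : Set (ℤ → A)) (hsft : IsNNSFT X) (htrans : LangTransitive X)
    (hinf : X.Infinite) :
    subshiftEntropy X ≥ Real.log 2 / (Fintype.card A : ℝ) := by
  obtain ⟨v, a, b, hva, hvb, hab⟩ : ∃ v a b, inLang X [v, a] ∧ inLang X [v, b] ∧ a ≠ b := by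
    by_contra! hdet
    exact hinf <| finite_of_inLang_pair_right_unique (fun _ hx => hsft.comp_add_mem hx)
      fun h h' => hdet _ _ _ h h'
  obtain ⟨u₁, hu₁, ha, hp⟩ := hsft.exists_isLoopAt htrans hva
  obtain ⟨u₂, hu₂, hb, hq⟩ := hsft.exists_isLoopAt htrans hvb
  have hpq : 0 < u₁.length + u₂.length := by
    have := List.length_pos_iff.2 hu₁.ne_nil
    omega
  have hcount := hsft.choose_le_card_words hu₁ hu₂ (by simpa [ha, hb] using hab)
  calc Real.log 2 / (Fintype.card A : ℝ)
      = Real.log 4 / (2 * Fintype.card A : ℝ) := by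
        rw [show (4 : ℝ) = 2 ^ 2 by norm_num, Real.log_pow]
        push_cast
        ring
    _ ≤ Real.log 4 / (u₁.length + u₂.length : ℕ) := by
        refine div_le_div_of_nonneg_left (Real.log_nonneg (by norm_num)) (by exact_mod_cast hpq) ?_
        exact_mod_cast (by omega : u₁.length + u₂.length ≤ 2 * Fintype.card A)
    _ ≤ subshiftEntropy X := log_four_div_le_subshiftEntropy hpq hcount
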